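/- arXiv:1705.04560 — 8 statements merged into one kernel-verified Lean document; each statement's English description precedes it below -/
import Mathlib

section
/- Let n be a positive integer with a divisor k satisfying 2k < n, and let γ ∈ F_{q^n} be a root of an irreducible polynomial of degree n/k over F_{q^k}. Then V = {u + u^q γ : u ∈ F_{q^k}} is a Sidon space of dimension k over F_q in F_{q^n}. -/
/-! Write `ψ u = u + σ(u) γ` with `σ` the `q`-Frobenius of `L / F`. Since `1, γ, γ²` are
independent over `L`, `ψ u * ψ v = ψ w * ψ z` forces `u v = w z` and
`u σ(v) + σ(u) v = w σ(z) + σ(w) z`. Dividing, the quotients `ρ x = σ(x) / x` satisfy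
`ρ u + ρ v = ρ w + ρ z` and `ρ u ρ v = ρ w ρ z`, so `{ρ u, ρ v} = {ρ w, ρ z}` as roots of one
quadratic. Finally `ρ x = ρ y` means that `σ` fixes `x / y`, i.e. `x / y ∈ F`, so `ψ x` and
`ψ y` span the same `F`-line. -/

open Polynomial

/-- A subspace `V` of a field extension `K / F` is a *Sidon space* if for all nonzero
`a, b, c, d ∈ V`, `a * b = c * d` implies `{aF, bF} = {cF, dF}`. -/
def IsSidon {F K : Type*} [Field F] [Field K] [Algebra F K] (V : Submodule F K) : Prop :=
  ∀ a ∈ V, ∀ b ∈ V, ∀ c ∈ V, ∀ d ∈ V,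
    a ≠ 0 → b ≠ 0 → c ≠ 0 → d ≠ 0 → a * b = c * d →
    ({Submodule.span F {a}, Submodule.span F {b}} : Set (Submodule F K)) =
      {Submodule.span F {c}, Submodule.span F {d}}

theorem eq_and_eq_or_eq_and_eq_of_add_eq_of_mul_eq {R : Type*} [CommRing R] [NoZeroDivisors R]
    {a b c d : R} (hadd : a + b = c + d) (hmul : a * b = c * d) :
    (a = c ∧ b = d) ∨ (a = d ∧ b = c) := by
  have h : (a - c) * (a - d) = 0 := by linear_combination a * hadd - hmul
  rcases mul_eq_zero.mp h with h | h
  · have hac := sub_eq_zero.mp h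
    exact .inl ⟨hac, by rw [hac] at hadd; exact add_left_cancel hadd⟩
  · have had := sub_eq_zero.mp h
    exact .inr ⟨had, by rw [had, add_comm c] at hadd; exact add_left_cancel hadd⟩

theorem FiniteField.exists_algebraMap_eq_of_pow_card_eq {F L : Type*} [Field F] [Fintype F]
    [CommRing L] [IsDomain L] [Algebra F L] {x : L} (hx : x ^ Fintype.card F = x) :
    ∃ e : F, algebraMap F L e = x := by
  set P : F[X] := X ^ Fintype.card F - X
  have hP : P ≠ 0 := FiniteField.X_pow_card_sub_X_ne_zero F Fintype.one_lt_card
  have hroots : P.roots.card = P.natDegree := by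
    rw [FiniteField.roots_X_pow_card_sub_X,
      FiniteField.X_pow_card_sub_X_natDegree_eq F Fintype.one_lt_card]
    rfl
  have hxP : x ∈ (P.map (algebraMap F L)).roots := by
    rw [mem_roots_map hP]
    simp [P, hx]
  rw [← roots_map_of_injective_of_card_eq_natDegree (algebraMap F L).injective hroots,
    Multiset.mem_map] at hxP
  obtain ⟨e, -, he⟩ := hxP
  exact ⟨e, he⟩

theorem Nat.two_lt_div_of_dvd_of_two_mul_lt {k n : ℕ} (hdvd : k ∣ n) (h : 2 * k < n) :
    2 < n / k :=
  (Nat.lt_div_iff_mul_lt' hdvd 2).mpr (by linarith)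

theorem minpoly.eq_of_add_mul_add_mul_sq_eq {L K : Type*} [Field L] [CommRing K] [Algebra L K]
    {γ : K} (hγ : 2 < (minpoly L γ).natDegree) {a b c a' b' c' : L}
    (h : algebraMap L K a + algebraMap L K b * γ + algebraMap L K c * γ ^ 2 =
      algebraMap L K a' + algebraMap L K b' * γ + algebraMap L K c' * γ ^ 2) :
    a = a' ∧ b = b' ∧ c = c' := by
  set g : L[X] := C (a - a') + C (b - b') * X + C (c - c') * X ^ 2
  have hgγ : Polynomial.aeval γ g = 0 := by
    simp only [g, map_add, map_sub, map_mul, map_pow, aeval_C, aeval_X]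
    linear_combination h
  have hg : g = 0 := by
    by_contra hg
    have hle := natDegree_le_of_dvd (minpoly.dvd L γ hgγ) hg
    have : g.natDegree ≤ 2 := by simp only [g]; compute_degree
    omega
  have h0 := congrArg (coeff · 0) hg
  have h1 := congrArg (coeff · 1) hg
  have h2 := congrArg (coeff · 2) hg
  simp only [g, coeff_add, coeff_C, coeff_C_mul_X, coeff_C_mul_X_pow, coeff_zero] at h0 h1 h2
  norm_num at h0 h1 h2
  exact ⟨sub_eq_zero.mp h0, sub_eq_zero.mp h1, sub_eq_zero.mp h2⟩

section Twisted

variable {F L K : Type*} [Field F] [Field L] [Field K] [Algebra F L] [Algebra L K] [Algebra F K]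
  [IsScalarTower F L K] (σ : L →ₐ[F] L) (γ : K)

def twistedMap : L →ₗ[F] K :=
  (IsScalarTower.toAlgHom F L K).toLinearMap +
    LinearMap.mulRight F γ ∘ₗ ((IsScalarTower.toAlgHom F L K).comp σ).toLinearMap

variable {σ γ}

theorem twistedMap_apply (u : L) :
    twistedMap σ γ u = algebraMap L K u + algebraMap L K (σ u) * γ := rfl

theorem twistedMap_mul_twistedMap (u v : L) :
    twistedMap σ γ u * twistedMap σ γ v = algebraMap L K (u * v) +
      algebraMap L K (u * σ v + σ u * v) * γ + algebraMap L K (σ (u * v)) * γ ^ 2 := by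
  simp only [twistedMap_apply, map_mul, map_add]
  ring

theorem twistedMap_injective (hγ : 2 < (minpoly L γ).natDegree) :
    Function.Injective (twistedMap σ γ) := by
  refine (injective_iff_map_eq_zero _).mpr fun u hu => ?_
  refine (minpoly.eq_of_add_mul_add_mul_sq_eq (b := σ u) (c := 0) (a' := 0) (b' := 0) (c' := 0)
    hγ ?_).1
  simpa [twistedMap_apply] using hu

theorem span_twistedMap_eq_of_div_eq (hσ : ∀ x, σ x = x → ∃ e : F, algebraMap F L e = x)
    {x y : L} (hx : x ≠ 0) (hy : y ≠ 0) (h : σ x / x = σ y / y) :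
    Submodule.span F {twistedMap σ γ x} = Submodule.span F {twistedMap σ γ y} := by
  have hσy : σ y ≠ 0 := map_ne_zero σ |>.mpr hy
  obtain ⟨e, he⟩ := hσ (x / y) <| by
    rw [map_div₀, div_eq_div_iff hσy hy]
    rw [div_eq_div_iff hx hy] at h
    linear_combination h
  have he0 : e ≠ 0 := by rintro rfl; exact div_ne_zero hx hy (by rw [← he, map_zero])
  have hxy : x = e • y := by rw [Algebra.smul_def, he, div_mul_cancel₀ x hy]
  rw [hxy, map_smul, Submodule.span_singleton_smul_eq (isUnit_iff_ne_zero.mpr he0)]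

theorem isSidon_range_twistedMap (hσ : ∀ x, σ x = x → ∃ e : F, algebraMap F L e = x)
    (hγ : 2 < (minpoly L γ).natDegree) : IsSidon (LinearMap.range (twistedMap σ γ)) := by
  rintro _ ⟨u, rfl⟩ _ ⟨v, rfl⟩ _ ⟨w, rfl⟩ _ ⟨z, rfl⟩ hu hv hw hz huv
  have ne_zero {x : L} (hx : twistedMap σ γ x ≠ 0) : x ≠ 0 := by
    rintro rfl; exact hx (map_zero _)
  replace hu := ne_zero hu
  replace hv := ne_zero hv
  replace hw := ne_zero hw
  replace hz := ne_zero hz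
  rw [twistedMap_mul_twistedMap, twistedMap_mul_twistedMap] at huv
  obtain ⟨hmul, hadd, -⟩ := minpoly.eq_of_add_mul_add_mul_sq_eq hγ huv
  have hρadd : σ u / u + σ v / v = σ w / w + σ z / z := by
    field_simp
    linear_combination (w * z) * hadd - (w * σ z + σ w * z) * hmul
  have hρmul : σ u / u * (σ v / v) = σ w / w * (σ z / z) := by
    rw [div_mul_div_comm, div_mul_div_comm, ← map_mul, ← map_mul, hmul]
  rcases eq_and_eq_or_eq_and_eq_of_add_eq_of_mul_eq hρadd hρmul with ⟨huw, hvz⟩ | ⟨huz, hvw⟩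
  · rw [span_twistedMap_eq_of_div_eq hσ hu hw huw, span_twistedMap_eq_of_div_eq hσ hv hz hvz]
  · rw [span_twistedMap_eq_of_div_eq hσ hu hz huz, span_twistedMap_eq_of_div_eq hσ hv hw hvw,
      Set.pair_comm]

end Twisted

theorem stmt2_general {F L K : Type*} [Field F] [Fintype F] [Field L] [Field K]
    [Algebra F L] [Algebra L K] [Algebra F K] [IsScalarTower F L K]
    (q n k : ℕ) (hq : q = Fintype.card F)
    (hkL : Module.finrank F L = k)
    (hdvd : k ∣ n) (h2k : 2 * k < n)
    (p : Polynomial L) (hp : Irreducible p) (hdeg : p.natDegree = n / k)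
    (γ : K) (hγ : Polynomial.aeval γ p = 0) :
    ∃ V : Submodule F K,
      (V : Set K) = {x | ∃ u : L, x = algebraMap L K u + algebraMap L K (u ^ q) * γ} ∧
      Module.finrank F V = k ∧ IsSidon V := by
  have hγdeg : 2 < (minpoly L γ).natDegree := by
    rw [← minpoly.eq_of_irreducible hp hγ,
      natDegree_mul_C (inv_ne_zero (leadingCoeff_ne_zero.mpr hp.ne_zero)), hdeg]
    exact Nat.two_lt_div_of_dvd_of_two_mul_lt hdvd h2k
  set ψ := twistedMap (FiniteField.frobeniusAlgHom F L) γ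
  refine ⟨LinearMap.range ψ, ?_, ?_, ?_⟩
  · ext x
    simp [ψ, twistedMap_apply, hq, eq_comm]
  · rw [LinearMap.finrank_range_of_inj (twistedMap_injective hγdeg), hkL]
  · exact isSidon_range_twistedMap
      (fun _ ↦ FiniteField.exists_algebraMap_eq_of_pow_card_eq) hγdeg

theorem stmt2 {F L K : Type*} [Field F] [Fintype F] [Field L] [Field K]
    [Algebra F L] [Algebra L K] [Algebra F K] [IsScalarTower F L K]
    (q n k : ℕ) (hq : q = Fintype.card F)
    (hkL : Module.finrank F L = k) (hn : Module.finrank F K = n)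
    (hdvd : k ∣ n) (h2k : 2 * k < n)
    (p : Polynomial L) (hp : Irreducible p) (hdeg : p.natDegree = n / k)
    (γ : K) (hγ : Polynomial.aeval γ p = 0) :
    ∃ V : Submodule F K,
      (V : Set K) = {x | ∃ u : L, x = algebraMap L K u + algebraMap L K (u ^ q) * γ} ∧
      Module.finrank F V = k ∧ IsSidon V :=
  stmt2_general q n k hq hkL hdvd h2k p hp hdeg γ hγ
end

section
/- Let q ≥ 3 be a prime power, k a positive integer, n = 2k, and let γ ∈ F_{q^n} be a root of an irreducible polynomial x² + bx + c over F_{q^k} where c is not a (q−1)st power of any element of F_{q^k}. Then V = {u + u^q γ : u ∈ F_{q^k}} is a Sidon space of dimension k in F_{q^n}. -/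
/-! Write `φ u = u + u ^ q γ`. Since `X² + bX + c` is irreducible, `1, γ` are independent
over `L`, so `φ` is injective and, using `γ² = -bγ - c`, an identity `φ u φ v = φ w φ z`
splits into `uv - c (uv)^q = wz - c (wz)^q` and
`uv^q + u^q v - b (uv)^q = wz^q + w^q z - b (wz)^q`.
If `uv ≠ wz`, then `e = uv - wz` satisfies `c e^(q-1) = 1`, making `c` a `(q-1)`st power; so
`uv = wz`, and then `{uv^q, u^q v}` and `{wz^q, w^q z}` have equal sums and products, hence
coincide. In either case a quotient such as `v / z` is fixed by the Frobenius, i.e. lies in `F`,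
which makes the lines `F u, F v` and `F w, F z` agree. -/

open Polynomial

namespace FiniteField

variable {F L : Type*} [Field F] [Fintype F] [Field L] [Algebra F L]

theorem mem_range_algebraMap_of_pow_card_eq_self {x : L} (h : x ^ Fintype.card F = x) :
    x ∈ (algebraMap F L).range := by
  have hq := Fintype.one_lt_card (α := F)
  have hsplit : (X ^ Fintype.card F - X : F[X]).Splits := by
    rw [splits_iff_card_roots, roots_X_pow_card_sub_X, X_pow_card_sub_X_natDegree_eq _ hq]
    rfl
  exact hsplit.mem_range_of_isRoot (X_pow_card_sub_X_ne_zero F hq) (by simp [h])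

theorem exists_units_smul_eq_of_pow_card_mul_eq {v z : L} (hv : v ≠ 0) (hz : z ≠ 0)
    (h : v ^ Fintype.card F * z = z ^ Fintype.card F * v) : ∃ t : Fˣ, t • z = v := by
  have hfix : (v / z) ^ Fintype.card F = v / z := by
    rw [div_pow, div_eq_div_iff (pow_ne_zero _ hz) hz, h, mul_comm]
  obtain ⟨t, ht⟩ := mem_range_algebraMap_of_pow_card_eq_self hfix
  have ht0 : t ≠ 0 := by rintro rfl; exact div_ne_zero hv hz (by simpa using ht.symm)
  exact ⟨Units.mk0 t ht0, by rw [Units.smul_mk0, Algebra.smul_def, ht, div_mul_cancel₀ _ hz]⟩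

theorem eq_of_sub_mul_pow_card_eq {c : L} (hc : ∀ y : L, y ^ (Fintype.card F - 1) ≠ c) {x y : L}
    (h : x - c * x ^ Fintype.card F = y - c * y ^ Fintype.card F) : x = y := by
  by_contra hne
  have he : x - y ≠ 0 := sub_ne_zero.mpr hne
  have hfrob : (x - y) ^ Fintype.card F = x ^ Fintype.card F - y ^ Fintype.card F :=
    map_sub (frobeniusAlgHom F L) x y
  have hpow : (x - y) ^ Fintype.card F = (x - y) ^ (Fintype.card F - 1) * (x - y) := by
    rw [← pow_succ, Nat.sub_add_cancel Fintype.card_pos]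
  refine hc (x - y)⁻¹ ?_
  rw [inv_pow, eq_comm]
  refine eq_inv_of_mul_eq_one_left (mul_right_cancel₀ he ?_)
  linear_combination -h + c * hfrob - c * hpow

end FiniteField

section QuadraticExtension

variable {L K : Type*} [Field L] [Field K] [Algebra L K]

theorem notMem_range_algebraMap_of_irreducible {p : L[X]} (hp : Irreducible p)
    (hdeg : p.degree ≠ 1) {γ : K} (hγ : aeval γ p = 0) : γ ∉ (algebraMap L K).range := by
  rintro ⟨l, rfl⟩
  refine hdeg (degree_eq_one_of_irreducible_of_root hp (x := l) ?_)
  rwa [aeval_algebraMap_apply, map_eq_zero_iff _ (algebraMap L K).injective] at hγ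

theorem eq_and_eq_of_algebraMap_add_mul_eq {γ : K} (hγ : γ ∉ (algebraMap L K).range)
    {x y x' y' : L}
    (h : algebraMap L K x + algebraMap L K y * γ = algebraMap L K x' + algebraMap L K y' * γ) :
    x = x' ∧ y = y' := by
  by_cases hy : y = y'
  · subst hy
    exact ⟨(algebraMap L K).injective (add_right_cancel h), rfl⟩
  · refine (hγ ⟨(x - x') / (y' - y), ?_⟩).elim
    have : algebraMap L K (y' - y) ≠ 0 := by simpa [sub_eq_zero] using Ne.symm hy
    rw [map_div₀, div_eq_iff this, map_sub, map_sub]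
    linear_combination h

end QuadraticExtension

section SidonMap

open FiniteField

variable {F L K : Type*} [Field F] [Fintype F] [Field L] [Field K]
  [Algebra F L] [Algebra L K] [Algebra F K] [IsScalarTower F L K]

theorem span_singleton_eq_of_mul_eq_of_mul_pow_card_eq {u v w z : L} (hu : u ≠ 0) (hv : v ≠ 0)
    (hw : w ≠ 0) (hz : z ≠ 0) (h : u * v = w * z)
    (hq : u * v ^ Fintype.card F = w * z ^ Fintype.card F) :
    Submodule.span F {u} = Submodule.span F {w} ∧
      Submodule.span F {v} = Submodule.span F {z} := by
  have hvz : v ^ Fintype.card F * z = z ^ Fintype.card F * v := by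
    refine mul_left_cancel₀ (mul_ne_zero hu hw) ?_
    linear_combination (w * z) * hq - (w * z ^ Fintype.card F) * h
  obtain ⟨t, rfl⟩ := exists_units_smul_eq_of_pow_card_mul_eq hv hz hvz
  have hwu : w = t • u := by
    refine mul_right_cancel₀ hz ?_
    rw [← h, Units.smul_def, Units.smul_def, Algebra.smul_def, Algebra.smul_def]
    ring
  refine ⟨Submodule.span_singleton_eq_span_singleton.mpr ⟨t, hwu.symm⟩,
    (Submodule.span_singleton_eq_span_singleton.mpr ⟨t, rfl⟩).symm⟩

theorem pair_span_singleton_eq_of_mul_eq_of_add_eq {u v w z : L} (hu : u ≠ 0) (hv : v ≠ 0)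
    (hw : w ≠ 0) (hz : z ≠ 0) (h : u * v = w * z)
    (hq : u * v ^ Fintype.card F + u ^ Fintype.card F * v =
      w * z ^ Fintype.card F + w ^ Fintype.card F * z) :
    ({Submodule.span F {u}, Submodule.span F {v}} : Set (Submodule F L)) =
      {Submodule.span F {w}, Submodule.span F {z}} := by
  have hpow : (u * v) ^ Fintype.card F = (w * z) ^ Fintype.card F := congrArg (· ^ _) h
  have hcases : (u * v ^ Fintype.card F - w * z ^ Fintype.card F) *
      (u * v ^ Fintype.card F - w ^ Fintype.card F * z) = 0 := by
    linear_combination (u * v ^ Fintype.card F) * hq - (w * z) * hpow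
      - (u ^ Fintype.card F * v ^ Fintype.card F) * h
  rcases mul_eq_zero.mp hcases with hA | hB
  · obtain ⟨huw, hvz⟩ := span_singleton_eq_of_mul_eq_of_mul_pow_card_eq (F := F) hu hv hw hz h
      (sub_eq_zero.mp hA)
    rw [huw, hvz]
  · obtain ⟨huz, hvw⟩ := span_singleton_eq_of_mul_eq_of_mul_pow_card_eq (F := F) hu hv hz hw
      (h.trans (mul_comm w z)) ((sub_eq_zero.mp hB).trans (mul_comm _ _))
    rw [huz, hvw, Set.pair_comm]

variable (F) in
def sidonMap (γ : K) : L →ₗ[F] K :=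
  (IsScalarTower.toAlgHom F L K).toLinearMap +
    LinearMap.mulRight F γ ∘ₗ
      ((IsScalarTower.toAlgHom F L K).comp (frobeniusAlgHom F L)).toLinearMap

theorem sidonMap_apply (γ : K) (u : L) :
    sidonMap F γ u = algebraMap L K u + algebraMap L K (u ^ Fintype.card F) * γ :=
  rfl

variable {γ : K}

theorem sidonMap_injective (hγ : γ ∉ (algebraMap L K).range) :
    Function.Injective (sidonMap F (L := L) γ) := by
  refine (injective_iff_map_eq_zero _).mpr fun u hu => ?_
  refine (eq_and_eq_of_algebraMap_add_mul_eq (y := u ^ Fintype.card F) (x' := 0) (y' := 0)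
    hγ ?_).1
  rw [map_zero, zero_mul, add_zero]
  exact hu

theorem sidonMap_mul_sidonMap {b c : L} (hγ : aeval γ (X ^ 2 + C b * X + C c) = 0) (x y : L) :
    sidonMap F γ x * sidonMap F γ y =
      algebraMap L K (x * y - c * (x * y) ^ Fintype.card F) +
        algebraMap L K (x * y ^ Fintype.card F + x ^ Fintype.card F * y -
          b * (x * y) ^ Fintype.card F) * γ := by
  simp only [map_add, aeval_X_pow, aeval_C, map_mul, aeval_X] at hγ
  simp only [sidonMap_apply, map_add, map_sub, map_mul, map_pow]
  linear_combination (algebraMap L K x * algebraMap L K y) ^ Fintype.card F * hγ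

theorem isSidon_range_sidonMap {b c : L} (hc : ∀ y : L, y ^ (Fintype.card F - 1) ≠ c)
    (hγL : γ ∉ (algebraMap L K).range) (hγ : aeval γ (X ^ 2 + C b * X + C c) = 0) :
    IsSidon (LinearMap.range (sidonMap F (L := L) γ)) := by
  rintro _ ⟨u, rfl⟩ _ ⟨v, rfl⟩ _ ⟨w, rfl⟩ _ ⟨z, rfl⟩ hu hv hw hz hmul
  rw [sidonMap_mul_sidonMap hγ, sidonMap_mul_sidonMap hγ] at hmul
  obtain ⟨hconst, hlin⟩ := eq_and_eq_of_algebraMap_add_mul_eq hγL hmul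
  have huv := eq_of_sub_mul_pow_card_eq hc hconst
  rw [huv, sub_left_inj] at hlin
  have hspan : ∀ x : L,
      Submodule.span F {sidonMap F γ x} = (Submodule.span F {x}).map (sidonMap F γ) := fun x => by
    rw [Submodule.map_span, Set.image_singleton]
  have hpair := pair_span_singleton_eq_of_mul_eq_of_add_eq (F := F) (by rintro rfl; simp at hu)
    (by rintro rfl; simp at hv) (by rintro rfl; simp at hw) (by rintro rfl; simp at hz) huv hlin
  simpa only [Set.image_pair, hspan] using congrArg (Submodule.map (sidonMap F γ) '' ·) hpair

end SidonMap

theorem stmt3_general {F L K : Type*} [Field F] [Fintype F] [Field L] [Field K]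
    [Algebra F L] [Algebra L K] [Algebra F K] [IsScalarTower F L K]
    (q k : ℕ) (hq : q = Fintype.card F)
    (hkL : Module.finrank F L = k)
    (b c : L) (hc : ∀ y : L, y ^ (q - 1) ≠ c)
    (hp : Irreducible (X ^ 2 + C b * X + C c))
    (γ : K) (hγ : Polynomial.aeval γ (X ^ 2 + C b * X + C c) = 0) :
    ∃ V : Submodule F K,
      (V : Set K) = {x | ∃ u : L, x = algebraMap L K u + algebraMap L K (u ^ q) * γ} ∧
      Module.finrank F V = k ∧ IsSidon V := by
  subst hq
  have hdeg : (X ^ 2 + C b * X + C c).degree ≠ 1 := by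
    have : (X ^ 2 + C b * X + C c).degree = 2 := by compute_degree!
    rw [this]
    decide
  have hγL := notMem_range_algebraMap_of_irreducible hp hdeg hγ
  refine ⟨LinearMap.range (sidonMap F γ), ?_, ?_, isSidon_range_sidonMap hc hγL hγ⟩
  · ext x
    simp [sidonMap_apply, eq_comm]
  · rw [LinearMap.finrank_range_of_inj (sidonMap_injective hγL), hkL]

theorem stmt3 {F L K : Type*} [Field F] [Fintype F] [Field L] [Field K]
    [Algebra F L] [Algebra L K] [Algebra F K] [IsScalarTower F L K]
    (q n k : ℕ) (hq : q = Fintype.card F) (hq3 : 3 ≤ q) (hkpos : 0 < k)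
    (hkL : Module.finrank F L = k) (hn : Module.finrank F K = n) (hnk : n = 2 * k)
    (b c : L) (hc : ∀ y : L, y ^ (q - 1) ≠ c)
    (hp : Irreducible (X ^ 2 + C b * X + C c))
    (γ : K) (hγ : Polynomial.aeval γ (X ^ 2 + C b * X + C c) = 0) :
    ∃ V : Submodule F K,
      (V : Set K) = {x | ∃ u : L, x = algebraMap L K u + algebraMap L K (u ^ q) * γ} ∧
      Module.finrank F V = k ∧ IsSidon V :=
  stmt3_general q k hq hkL b c hc hp γ hγ
end

section
/- For any prime power q and integer n ≥ 6, there exists a Sidon space in F_{q^n} of dimension ⌊(n−2)/4⌋ over F_q. -/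
/-!
Let `q = |F|`, pick any `k`-dimensional subspace `U` and set `V = ψ U` with `ψ u = u + u ^ q * γ`,
which is `F`-linear. For `a, b, c, d ∈ U`, `ψ a * ψ b - ψ c * ψ d` is the value at `γ` of a
quadratic whose coefficients are `ab - cd`, `ab^q + a^q b - cd^q - c^q d` and `(ab - cd)^q`.
There are at most `q ^ (4k)` such quadratics, so when `q ^ n > 2 q ^ (4k)` some `γ` is a root of
none of the nonzero ones. Then `ψ a * ψ b = ψ c * ψ d` forces `ab = cd` and
`ab^q + a^q b = cd^q + c^q d`, whence `(a c^q - a^q c)(b c^q - b^q c) = 0`: `c / a` or `c / b` is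
fixed by the Frobenius, hence lies in `F`.
-/

open Polynomial

/-- For `ψ u = u + u ^ q * γ` with `q = |F|`, the value at `γ` is `ψ a * ψ b - ψ c * ψ d`. -/
noncomputable def sidonPoly {R : Type*} [CommRing R] (q : ℕ) (a b c d : R) : R[X] :=
  C ((a * b - c * d) ^ q) * X ^ 2 + C (a * b ^ q + a ^ q * b - (c * d ^ q + c ^ q * d)) * X
    + C (a * b - c * d)

section sidonPoly

variable {R : Type*} [CommRing R] (q : ℕ) (a b c d : R)

lemma natDegree_sidonPoly_le : (sidonPoly q a b c d).natDegree ≤ 2 :=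
  natDegree_quadratic_le

variable {q a b c d}

lemma mul_eq_mul_of_sidonPoly_eq_zero (h : sidonPoly q a b c d = 0) :
    a * b = c * d ∧ a * b ^ q + a ^ q * b = c * d ^ q + c ^ q * d := by
  have h0 := congrArg (coeff · 0) h
  have h1 := congrArg (coeff · 1) h
  simp only [sidonPoly, coeff_add, coeff_C_mul, coeff_X_pow, coeff_X_zero, coeff_X_one,
    coeff_C_zero, coeff_C_succ] at h0 h1
  norm_num at h0 h1
  exact ⟨sub_eq_zero.mp h0, sub_eq_zero.mp h1⟩

lemma mul_pow_sub_pow_mul_mul_eq_zero (habcd : a * b = c * d)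
    (hq : a * b ^ q + a ^ q * b = c * d ^ q + c ^ q * d) :
    (a * c ^ q - a ^ q * c) * (b * c ^ q - b ^ q * c) = 0 := by
  have hpow : a ^ q * b ^ q = c ^ q * d ^ q := by rw [← mul_pow, habcd, mul_pow]
  linear_combination (c ^ q) ^ 2 * habcd - (c * c ^ q) * hq + c ^ 2 * hpow

end sidonPoly

theorem exists_forall_isRoot_imp_eq_zero {R ι : Type*} [CommRing R] [IsDomain R] [Fintype R]
    [Fintype ι] (p : ι → R[X]) (d : ℕ) (hd : ∀ i, (p i).natDegree ≤ d)
    (hcard : Fintype.card ι * d < Fintype.card R) :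
    ∃ x, ∀ i, (p i).IsRoot x → p i = 0 := by
  classical
  let allRoots : Finset R := Finset.univ.biUnion fun i ↦ (p i).roots.toFinset
  have hcard' : allRoots.card < (Finset.univ : Finset R).card := calc
    allRoots.card ≤ ∑ i, (p i).roots.toFinset.card := Finset.card_biUnion_le
    _ ≤ ∑ _i : ι, d := Finset.sum_le_sum fun i _ ↦
      (Multiset.toFinset_card_le _).trans ((card_roots' _).trans (hd i))
    _ < _ := by simpa using hcard
  obtain ⟨x, -, hx⟩ := Finset.exists_mem_notMem_of_card_lt_card hcard'
  refine ⟨x, fun i hi ↦ by_contra fun hi0 ↦ hx ?_⟩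
  exact Finset.mem_biUnion.mpr
    ⟨i, Finset.mem_univ _, Multiset.mem_toFinset.mpr ((mem_roots hi0).mpr hi)⟩

section frobeniusTwist

variable (F : Type*) {K : Type*} [Field F] [Fintype F] [Field K] [Algebra F K]

lemma mem_range_algebraMap_of_pow_card_eq {z : K} (hz : z ^ Fintype.card F = z) :
    z ∈ (algebraMap F K).range := by
  have hne : (X ^ Fintype.card F - X : F[X]) ≠ 0 :=
    FiniteField.X_pow_card_sub_X_ne_zero F Fintype.one_lt_card
  have hsplits : (X ^ Fintype.card F - X : F[X]).Splits := by
    rw [splits_iff_card_roots, FiniteField.roots_X_pow_card_sub_X, ← Finset.card_def,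
      Finset.card_univ, FiniteField.X_pow_card_sub_X_natDegree_eq F Fintype.one_lt_card]
  exact hsplits.mem_range_of_isRoot hne (by simp [hz])

def frobeniusTwist (γ : K) : K →ₗ[F] K :=
  LinearMap.id + LinearMap.mulRight F γ ∘ₗ (FiniteField.frobeniusAlgHom F K).toLinearMap

variable {F}

lemma frobeniusTwist_apply (γ u : K) : frobeniusTwist F γ u = u + u ^ Fintype.card F * γ := rfl

lemma eval_sidonPoly (γ a b c d : K) :
    (sidonPoly (Fintype.card F) a b c d).eval γ =
      frobeniusTwist F γ a * frobeniusTwist F γ b -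
        frobeniusTwist F γ c * frobeniusTwist F γ d := by
  have hfrob : (a * b - c * d) ^ Fintype.card F = a ^ Fintype.card F * b ^ Fintype.card F
      - c ^ Fintype.card F * d ^ Fintype.card F := by
    simp only [← FiniteField.frobeniusAlgHom_apply F K, map_sub, map_mul]
  simp only [sidonPoly, frobeniusTwist_apply, eval_add, eval_mul, eval_pow, eval_C, eval_X, hfrob]
  ring

lemma exists_smul_eq_of_mul_pow_eq {a c : K} (ha : a ≠ 0)
    (h : a * c ^ Fintype.card F = a ^ Fintype.card F * c) : ∃ l : F, c = l • a := by
  obtain ⟨l, hl⟩ := mem_range_algebraMap_of_pow_card_eq F (z := c / a) (by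
    rw [div_pow, div_eq_div_iff (pow_ne_zero _ ha) ha]
    linear_combination h)
  exact ⟨l, by rw [Algebra.smul_def, hl, div_mul_cancel₀ c ha]⟩

lemma span_singleton_eq_of_mul_pow_eq (f : K →ₗ[F] K) {a b c d : K} (ha : a ≠ 0) (hc : c ≠ 0)
    (habcd : a * b = c * d) (h : a * c ^ Fintype.card F = a ^ Fintype.card F * c) :
    Submodule.span F {f c} = Submodule.span F {f a} ∧
      Submodule.span F {f d} = Submodule.span F {f b} := by
  obtain ⟨l, rfl⟩ := exists_smul_eq_of_mul_pow_eq ha h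
  have hl : IsUnit l := isUnit_iff_ne_zero.mpr (left_ne_zero_of_smul hc)
  have hb : b = l • d := mul_left_cancel₀ ha (by rw [habcd, smul_mul_assoc, mul_smul_comm])
  rw [hb, map_smul, map_smul, Submodule.span_singleton_smul_eq hl,
    Submodule.span_singleton_smul_eq hl]
  exact ⟨rfl, rfl⟩

end frobeniusTwist

section IsSidon

variable {F K : Type*} [Field F] [Fintype F] [Field K] [Algebra F K]

def AvoidsSidonPolyRoots (U : Submodule F K) (γ : K) : Prop :=
  ∀ a ∈ U, ∀ b ∈ U, ∀ c ∈ U, ∀ d ∈ U,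
    (sidonPoly (Fintype.card F) a b c d).IsRoot γ → sidonPoly (Fintype.card F) a b c d = 0

lemma injective_frobeniusTwist_comp_subtype {U : Submodule F K} {γ : K}
    (hγ : AvoidsSidonPolyRoots U γ) :
    Function.Injective (frobeniusTwist F γ ∘ₗ U.subtype) := by
  refine (injective_iff_map_eq_zero _).mpr fun u hu ↦ Subtype.ext ?_
  have hroot : (sidonPoly (Fintype.card F) (u : K) u 0 0).IsRoot γ := by
    simpa [IsRoot, eval_sidonPoly] using hu
  simpa using (mul_eq_mul_of_sidonPoly_eq_zero (hγ u u.2 u u.2 0 U.zero_mem 0 U.zero_mem hroot)).1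

lemma isSidon_map_frobeniusTwist {U : Submodule F K} {γ : K}
    (hγ : AvoidsSidonPolyRoots U γ) :
    IsSidon (U.map (frobeniusTwist F γ)) := by
  rintro _ ⟨a, ha, rfl⟩ _ ⟨b, hb, rfl⟩ _ ⟨c, hc, rfl⟩ _ ⟨d, hd, rfl⟩ ha0 hb0 hc0 - hmul
  obtain ⟨habcd, hq⟩ := mul_eq_mul_of_sidonPoly_eq_zero <|
    hγ a ha b hb c hc d hd (by rw [IsRoot, eval_sidonPoly, hmul, sub_self])
  replace ha0 : a ≠ 0 := by rintro rfl; exact ha0 (map_zero _)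
  replace hb0 : b ≠ 0 := by rintro rfl; exact hb0 (map_zero _)
  replace hc0 : c ≠ 0 := by rintro rfl; exact hc0 (map_zero _)
  rcases mul_eq_zero.mp (mul_pow_sub_pow_mul_mul_eq_zero habcd hq) with h | h
  · obtain ⟨hca, hdb⟩ := span_singleton_eq_of_mul_pow_eq (frobeniusTwist F γ) ha0 hc0 habcd
      (sub_eq_zero.mp h)
    rw [hca, hdb]
  · obtain ⟨hcb, hda⟩ := span_singleton_eq_of_mul_pow_eq (frobeniusTwist F γ) hb0 hc0
      ((mul_comm b a).trans habcd) (sub_eq_zero.mp h)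
    rw [hcb, hda, Set.pair_comm]

theorem exists_isSidon_finrank_eq (k : ℕ) (hk : 4 * k + 2 ≤ Module.finrank F K) :
    ∃ V : Submodule F K, Module.finrank F V = k ∧ IsSidon V := by
  have : FiniteDimensional F K := .of_finrank_pos (by omega)
  have : Finite K := Module.finite_of_finite F
  have : Fintype K := Fintype.ofFinite K
  obtain ⟨v, hv⟩ := exists_linearIndependent_of_le_finrank (R := F) (M := K) (n := k) (by omega)
  set U := Submodule.span F (Set.range v)
  have hU : Module.finrank F U = k := by rw [finrank_span_eq_card hv, Fintype.card_fin]
  have : Fintype U := Fintype.ofFinite U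
  have hcard : Fintype.card (U × U × U × U) * 2 < Fintype.card K := by
    have hq : 2 ≤ Fintype.card F := Fintype.one_lt_card
    rw [Module.card_eq_pow_finrank (K := F) (V := K)]
    simp only [Fintype.card_prod, Module.card_eq_pow_finrank (K := F) (V := U), hU]
    calc _ = (Fintype.card F ^ k) ^ 4 * 2 := by ring
      _ < (Fintype.card F ^ k) ^ 4 * Fintype.card F ^ 2 :=
          Nat.mul_lt_mul_of_pos_left (by nlinarith) (by positivity)
      _ = Fintype.card F ^ (4 * k + 2) := by ring
      _ ≤ _ := Nat.pow_le_pow_right (by omega) hk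
  obtain ⟨γ, hγ⟩ := exists_forall_isRoot_imp_eq_zero
    (fun t : U × U × U × U ↦ sidonPoly (Fintype.card F) (t.1 : K) t.2.1 t.2.2.1 t.2.2.2) 2
    (fun _ ↦ natDegree_sidonPoly_le ..) hcard
  have hγU : AvoidsSidonPolyRoots U γ := fun a ha b hb c hc d hd ↦
    hγ (⟨a, ha⟩, ⟨b, hb⟩, ⟨c, hc⟩, ⟨d, hd⟩)
  refine ⟨U.map (frobeniusTwist F γ), ?_, isSidon_map_frobeniusTwist hγU⟩
  rw [← U.range_subtype, ← LinearMap.range_comp,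
    LinearMap.finrank_range_of_inj (injective_frobeniusTwist_comp_subtype hγU), hU]

end IsSidon

theorem stmt7 {F K : Type*} [Field F] [Fintype F] [Field K] [Algebra F K]
    (n : ℕ) (hn : Module.finrank F K = n) (h6 : 6 ≤ n) :
    ∃ V : Submodule F K, Module.finrank F V = (n - 2) / 4 ∧ IsSidon V :=
  exists_isSidon_finrank_eq _ (by omega)
end

section
/- Let S = {n_1, …, n_k} ⊆ [m] be a Sidon set of integers, let n > 2m, and let γ ∈ F_{q^n} be an element not contained in any proper subfield of F_{q^n}. Then V = span_{F_q}{γ^{n_1}, …, γ^{n_k}} is a k-dimensional Sidon space with dim(V²) = k(k+1)/2. -/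
/-!
Since `γ` generates `K`, the powers `1, γ, …, γ^(n-1)` are linearly independent. As
`N i + N j ≤ 2m < n` and `S` is a Sidon set, the products `γ^(N i) γ^(N j)` (`i ≤ j`) are pairwise
distinct such powers, hence independent; this gives both dimensions. It also makes `V` a Sidon
space: for `x : F^k`, a functional `ℓ` on `K` with `ℓ (γ^(N i) γ^(N j)) = x i * x j` turns
`a * b = c * d` into `(f ⬝ x) (g ⬝ x) = (h ⬝ x) (l ⬝ x)` for the coordinate vectors of `a, b, c, d`.
So the hyperplane `ker (h ⬝ ·)` lies in `ker (f ⬝ ·) ∪ ker (g ⬝ ·)`, hence in one of them, and `h`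
is proportional to `f` or to `g`.
-/

open Polynomial

open Submodule Function

namespace Module.Dual

variable {F W : Type*} [Field F] [AddCommGroup W] [Module F W]

theorem exists_eq_smul_of_ker_le {φ ψ : Dual F W} (h : LinearMap.ker φ ≤ LinearMap.ker ψ) :
    ∃ c : F, ψ = c • φ := by
  have : ψ ∈ span F (Set.range fun _ : Unit => φ) :=
    mem_span_of_iInf_ker_le_ker (by simpa only [iInf_const] using h)
  rw [Set.range_const, mem_span_singleton] at this
  obtain ⟨c, hc⟩ := this
  exact ⟨c, hc.symm⟩

theorem exists_eq_smul_or_exists_eq_smul_of_mul_eq_mul {α β γ δ : Dual F W}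
    (h : ∀ w, α w * β w = γ w * δ w) : (∃ c : F, α = c • γ) ∨ ∃ c : F, β = c • γ := by
  have hker : (LinearMap.ker γ : Set W) ⊆ LinearMap.ker α ∪ LinearMap.ker β := fun w hw ↦
    mul_eq_zero.mp ((h w).trans (by rw [LinearMap.mem_ker.mp hw, zero_mul]))
  exact (AddSubgroupClass.subset_union.mp hker).imp exists_eq_smul_of_ker_le
    exists_eq_smul_of_ker_le

end Module.Dual

theorem LinearIndependent.exists_dual_apply_eq {F W ι : Type*} [Field F] [AddCommGroup W]
    [Module F W] {v : ι → W} (hv : LinearIndependent F v) (y : ι → F) :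
    ∃ ℓ : Module.Dual F W, ∀ i, ℓ (v i) = y i := by
  obtain ⟨ℓ, hℓ⟩ := LinearMap.exists_extend (Finsupp.linearCombination F y ∘ₗ hv.repr)
  refine ⟨ℓ, fun i ↦ ?_⟩
  have := LinearMap.congr_fun hℓ ⟨v i, subset_span ⟨i, rfl⟩⟩
  simpa [hv.repr_eq_single i ⟨v i, _⟩ rfl] using this

theorem Sym2.mul_map_pow {M ι : Type*} [CommMonoid M] (x : M) (e : ι → ℕ) (z : Sym2 ι) :
    Sym2.mul (Sym2.map (fun i ↦ x ^ e i) z) = x ^ Sym2.add (Sym2.map e z) := by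
  induction z using Sym2.ind with
  | _ i j => simp [pow_add]

theorem Sym2.injective_add_map_of_sidon {ι M : Type*} [AddCommMagma M] {N : ι → M}
    (hN : Injective N)
    (hSidon : ∀ i j s t, N i + N j = N s + N t → ({N i, N j} : Set M) = {N s, N t}) :
    Injective (Sym2.add ∘ Sym2.map N) := by
  intro z₁ z₂
  induction z₁, z₂ using Sym2.inductionOn₂ with
  | _ i j s t =>
    intro hsum
    simp only [comp_apply, Sym2.map_mk, Sym2.add_mk] at hsum
    rcases Set.pair_eq_pair_iff.mp (hSidon i j s t hsum) with ⟨hs, ht⟩ | ⟨ht, hs⟩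
    · rw [hN hs, hN ht]
    · rw [hN hs, hN ht, Sym2.eq_swap]

section SidonSpace

variable {F K : Type*} [Field F] [Field K] [Algebra F K]

theorem span_singleton_pair_eq_of_eq_smul {a b c d : K} (μ : F) (hac : a = μ • c) (ha : a ≠ 0)
    (hc : c ≠ 0) (h : a * b = c * d) :
    ({span F {a}, span F {b}} : Set (Submodule F K)) = {span F {c}, span F {d}} := by
  have hμ : IsUnit μ := isUnit_iff_ne_zero.mpr (by rintro rfl; simp [hac] at ha)
  have hdb : d = μ • b := mul_left_cancel₀ hc (by rw [← h, hac, smul_mul_assoc, mul_smul_comm])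
  rw [hac, hdb, span_singleton_smul_eq hμ, span_singleton_smul_eq hμ]

theorem span_mul_span_eq_span_sym2Mul {ι : Type*} (v : ι → K) :
    span F (Set.range v) * span F (Set.range v) = span F (Set.range (Sym2.mul ∘ Sym2.map v)) := by
  rw [span_mul_span]
  congr 1
  ext x
  constructor
  · rintro ⟨_, ⟨i, rfl⟩, _, ⟨j, rfl⟩, rfl⟩
    exact ⟨s(i, j), rfl⟩
  · rintro ⟨z, rfl⟩
    induction z using Sym2.ind with
    | _ i j => exact ⟨v i, ⟨i, rfl⟩, v j, ⟨j, rfl⟩, rfl⟩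

theorem isSidon_span_of_linearIndependent_sym2Mul {ι : Type*} [Fintype ι] {v : ι → K}
    (hv : LinearIndependent F (Sym2.mul ∘ Sym2.map v)) : IsSidon (span F (Set.range v)) := by
  classical
  intro a ha b hb c hc d hd ha0 hb0 hc0 hd0 habcd
  obtain ⟨f, rfl⟩ := (mem_span_range_iff_exists_fun F).mp ha
  obtain ⟨g, rfl⟩ := (mem_span_range_iff_exists_fun F).mp hb
  obtain ⟨h, rfl⟩ := (mem_span_range_iff_exists_fun F).mp hc
  obtain ⟨l, rfl⟩ := (mem_span_range_iff_exists_fun F).mp hd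
  let form (u : ι → F) : Module.Dual F (ι → F) := Fintype.linearCombination F u
  have hforms : ∀ x : ι → F, form f x * form g x = form h x * form l x := by
    intro x
    obtain ⟨ℓ, hℓ⟩ := hv.exists_dual_apply_eq (Sym2.mul ∘ Sym2.map x)
    have hexpand : ∀ u w : ι → F,
        ℓ ((∑ i, u i • v i) * ∑ j, w j • v j) = form u x * form w x := by
      intro u w
      have := fun i j ↦ hℓ s(i, j)
      simp only [comp_apply, Sym2.map_mk, Sym2.mul_mk] at this
      simp only [form, Fintype.linearCombination_apply, Finset.sum_mul_sum, map_sum,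
        smul_mul_smul_comm, map_smul, this, smul_eq_mul]
      exact Finset.sum_congr rfl fun i _ ↦ Finset.sum_congr rfl fun j _ ↦ by ring
    rw [← hexpand, ← hexpand, habcd]
  have hcoeff : ∀ {u w : ι → F} {μ : F}, form u = μ • form w →
      ∑ i, u i • v i = μ • ∑ i, w i • v i := by
    intro u w μ huw
    have : u = μ • w := funext fun i ↦ by
      simpa [form, Fintype.linearCombination_apply_single] using
        LinearMap.congr_fun huw (Pi.single i 1)
    simp [this, Finset.smul_sum, smul_smul]
  rcases Module.Dual.exists_eq_smul_or_exists_eq_smul_of_mul_eq_mul hforms with ⟨μ, hμ⟩ | ⟨μ, hμ⟩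
  · exact span_singleton_pair_eq_of_eq_smul μ (hcoeff hμ) ha0 hc0 habcd
  · rw [Set.pair_comm]
    exact span_singleton_pair_eq_of_eq_smul μ (hcoeff hμ) hb0 hc0 (by rw [mul_comm, habcd])

end SidonSpace

theorem linearIndependent_pow_of_injective {F S ι : Type*} [Field F] [Ring S] [Algebra F S] (x : S)
    {e : ι → ℕ} (he : Injective e) (hlt : ∀ i, e i < (minpoly F x).natDegree) :
    LinearIndependent F fun i ↦ x ^ e i :=
  (linearIndependent_pow x).comp (fun i ↦ ⟨e i, hlt i⟩) fun _ _ hij ↦ he (congrArg Fin.val hij)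

theorem natDegree_minpoly_eq_finrank {F K : Type*} [Field F] [Field K] [Algebra F K]
    [FiniteDimensional F K] {γ : K} (hγ : ∀ E : Subfield K, γ ∈ E → E = ⊤) :
    (minpoly F γ).natDegree = Module.finrank F K := by
  have htop : IntermediateField.adjoin F {γ} = ⊤ := IntermediateField.toSubfield_injective <| by
    simpa using hγ _ (IntermediateField.mem_adjoin_simple_self F γ)
  rw [← IntermediateField.adjoin.finrank (IsIntegral.of_finite F γ), htop,
    IntermediateField.finrank_top']

theorem stmt10 {F K : Type*} [Field F] [Fintype F] [Field K] [Fintype K] [Algebra F K]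
    (q n m k : ℕ) (hq : q = Fintype.card F) (hcard : Fintype.card K = q ^ n)
    (N : Fin k → ℕ) (hNinj : Function.Injective N)
    (hrange : ∀ i, 1 ≤ N i ∧ N i ≤ m)
    (hSidon : ∀ i j s t : Fin k, N i + N j = N s + N t →
      ({N i, N j} : Set ℕ) = {N s, N t})
    (hnm : 2 * m < n)
    (γ : K) (hγ : ∀ E : Subfield K, γ ∈ E → E = ⊤) :
    Module.finrank F ↥(Submodule.span F (Set.range fun i => γ ^ N i)) = k ∧
    IsSidon (Submodule.span F (Set.range fun i => γ ^ N i)) ∧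
    Module.finrank F ↥(Submodule.span F (Set.range fun i => γ ^ N i) *
      Submodule.span F (Set.range fun i => γ ^ N i)) = k * (k + 1) / 2 := by
  have hdeg : (minpoly F γ).natDegree = n := by
    rw [natDegree_minpoly_eq_finrank hγ]
    refine Nat.pow_right_injective (Fintype.one_lt_card (α := F)) ?_
    dsimp only
    rw [← Module.card_eq_pow_finrank, hcard, hq]
  have hV : LinearIndependent F fun i ↦ γ ^ N i :=
    linearIndependent_pow_of_injective γ hNinj fun i ↦ by have := (hrange i).2; omega
  have hsum_lt : ∀ z, Sym2.add (Sym2.map N z) < (minpoly F γ).natDegree := fun z ↦ by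
    induction z using Sym2.ind with
    | _ i j =>
      simp only [Sym2.map_mk, Sym2.add_mk]
      have := (hrange i).2; have := (hrange j).2; omega
  have hV2 : LinearIndependent F (Sym2.mul ∘ Sym2.map fun i ↦ γ ^ N i) := by
    simpa only [comp_def, Sym2.mul_map_pow] using linearIndependent_pow_of_injective γ
      (Sym2.injective_add_map_of_sidon hNinj hSidon) hsum_lt
  refine ⟨by rw [finrank_span_eq_card hV, Fintype.card_fin],
    isSidon_span_of_linearIndependent_sym2Mul hV2, ?_⟩
  rw [span_mul_span_eq_span_sym2Mul, finrank_span_eq_card hV2, Sym2.card, Fintype.card_fin,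
    Nat.choose_two_right, add_tsub_cancel_right, mul_comm]
end

section
/- For k = q^m with m ≥ 1, the polynomial x^k + x + 1 over F_q divides x^{k²−1} − 1. -/
/-!
If `k` is a power of the characteristic, Frobenius gives
`(X^k + X + 1)^k = X^(k^2) + X^k + 1`, so `f = X^k + X + 1` divides
`f^k - f = X^(k^2) - X = X * (X^(k^2-1) - 1)`; since `f - X * (X^(k-1) + 1) = 1`,
`f` is coprime to `X` and hence divides `X^(k^2-1) - 1`.
-/

open Polynomial

section ExpChar

variable {R : Type*} [CommRing R] (p : ℕ) [ExpChar R p]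

theorem pow_add_self_add_one_pow_expChar_pow (a : R) (e : ℕ) :
    (a ^ p ^ e + a + 1) ^ p ^ e = a ^ (p ^ e) ^ 2 + a ^ p ^ e + 1 := by
  rw [add_pow_expChar_pow, add_pow_expChar_pow, one_pow, ← pow_mul, sq]

theorem X_pow_add_X_add_one_dvd_X_pow_sq_sub_X (e : ℕ) :
    (X ^ p ^ e + X + 1 : R[X]) ∣ X ^ (p ^ e) ^ 2 - X := by
  have hfrob := pow_add_self_add_one_pow_expChar_pow p (X : R[X]) e
  have hpos : p ^ e ≠ 0 := pow_ne_zero e (expChar_pos R p).ne'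
  have hdvd := dvd_sub (dvd_pow_self (X ^ p ^ e + X + 1 : R[X]) hpos) dvd_rfl
  rw [hfrob] at hdvd
  convert hdvd using 1
  ring

end ExpChar

theorem isCoprime_X_pow_add_X_add_one_X {R : Type*} [CommRing R] {k : ℕ} (hk : 1 ≤ k) :
    IsCoprime (X ^ k + X + 1 : R[X]) X := by
  refine ⟨1, -(X ^ (k - 1) + 1), ?_⟩
  rw [show (X : R[X]) ^ k = X ^ (k - 1) * X by rw [← pow_succ, Nat.sub_add_cancel hk]]
  ring

theorem X_pow_sub_X_eq_X_mul {R : Type*} [CommRing R] {n : ℕ} (hn : 1 ≤ n) :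
    (X ^ n - X : R[X]) = X * (X ^ (n - 1) - 1) := by
  rw [mul_sub, ← pow_succ', Nat.sub_add_cancel hn, mul_one]

theorem X_pow_add_X_add_one_dvd_X_pow_sq_sub_one {R : Type*} [CommRing R] (p : ℕ)
    [ExpChar R p] (e : ℕ) :
    (X ^ p ^ e + X + 1 : R[X]) ∣ X ^ ((p ^ e) ^ 2 - 1) - 1 := by
  have hk : 1 ≤ p ^ e := Nat.one_le_pow _ _ (expChar_pos R p)
  have hdvd := X_pow_add_X_add_one_dvd_X_pow_sq_sub_X (R := R) p e
  rw [X_pow_sub_X_eq_X_mul (Nat.one_le_pow _ _ hk)] at hdvd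
  exact (isCoprime_X_pow_add_X_add_one_X hk).dvd_of_dvd_mul_left hdvd

theorem stmt12_general {F : Type*} [Field F] [Fintype F] (q m k : ℕ)
    (hq : q = Fintype.card F) (hk : k = q ^ m) :
    (X ^ k + X + 1 : Polynomial F) ∣ X ^ (k ^ 2 - 1) - 1 := by
  obtain ⟨p, _, n, hp, hcard⟩ := FiniteField.card' F
  have : ExpChar F p := ExpChar.prime hp
  rw [hk, hq, hcard, ← pow_mul]
  exact X_pow_add_X_add_one_dvd_X_pow_sq_sub_one p _

theorem stmt12 {F : Type*} [Field F] [Fintype F] (q m k : ℕ)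
    (hq : q = Fintype.card F) (hm : 1 ≤ m) (hk : k = q ^ m) :
    (X ^ k + X + 1 : Polynomial F) ∣ X ^ (k ^ 2 - 1) - 1 :=
  stmt12_general q m k hq hk
end

section
/- For k = q^m with m ≥ 1, the linearized polynomial x^{q^k} + x^q + x over F_q splits completely in F_{q^{k²−1}}. -/
/-!
Let `σ` be the `q`-Frobenius `x ↦ x ^ q`. Since `σ` is `𝔽_q`-linear, `f ↦ f(σ) X` sends an
ordinary polynomial `∑ aᵢ Xⁱ` to its linearized polynomial `∑ aᵢ X^{qⁱ}` and products to
compositions, so `f ∣ g` implies that the linearization of `f` divides that of `g`. As `k` is a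
power of `q`, `P = X^k + X + 1` satisfies `P^k = X^{k²} + X^k + 1`, hence `P` divides
`P^k - P = X (X^{k²-1} - 1)`, and `P` is coprime to `X`. Linearizing, `X^{q^k} + X^q + X` divides
`X^{q^{k²-1}} - X`, which splits in the field with `q^{k²-1}` elements.
-/

open Polynomial

namespace FiniteField

variable {F : Type*} [Field F] [Fintype F]

section Algebra

variable {A : Type*} [CommRing A] [Algebra F A]

theorem frobeniusAlgHom_toLinearMap_pow_apply (n : ℕ) (a : A) :
    ((frobeniusAlgHom F A).toLinearMap ^ n) a = a ^ Fintype.card F ^ n := by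
  rw [Module.End.pow_apply, AlgHom.coe_toLinearMap, coe_frobeniusAlgHom, pow_iterate]

theorem add_pow_card_pow (a b : A) (n : ℕ) :
    (a + b) ^ Fintype.card F ^ n = a ^ Fintype.card F ^ n + b ^ Fintype.card F ^ n := by
  simp only [← frobeniusAlgHom_toLinearMap_pow_apply, map_add]

theorem aeval_frobeniusAlgHom_monomial_apply (n : ℕ) (c : F) (a : A) :
    aeval (frobeniusAlgHom F A).toLinearMap (monomial n c) a = c • a ^ Fintype.card F ^ n := by
  rw [aeval_monomial, Module.End.mul_apply, Module.algebraMap_end_apply,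
    frobeniusAlgHom_toLinearMap_pow_apply]

theorem dvd_aeval_frobeniusAlgHom_apply (f : F[X]) (a : A) :
    a ∣ aeval (frobeniusAlgHom F A).toLinearMap f a := by
  induction f using Polynomial.induction_on' with
  | add f g hf hg => rw [map_add, LinearMap.add_apply]; exact dvd_add hf hg
  | monomial n c =>
    rw [aeval_frobeniusAlgHom_monomial_apply, Algebra.smul_def]
    exact (dvd_pow_self a (pow_ne_zero n Fintype.card_ne_zero)).mul_left _

end Algebra

noncomputable def linearize (f : F[X]) : F[X] :=
  aeval (frobeniusAlgHom F F[X]).toLinearMap f X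

theorem linearize_add (f g : F[X]) : linearize (f + g) = linearize f + linearize g := by
  simp only [linearize, map_add, LinearMap.add_apply]

theorem linearize_sub (f g : F[X]) : linearize (f - g) = linearize f - linearize g := by
  simp only [linearize, map_sub, LinearMap.sub_apply]

theorem linearize_X_pow (n : ℕ) : linearize (X ^ n : F[X]) = X ^ Fintype.card F ^ n := by
  rw [linearize, map_pow, aeval_X, frobeniusAlgHom_toLinearMap_pow_apply]

theorem linearize_X : linearize (X : F[X]) = X ^ Fintype.card F := by
  simpa using linearize_X_pow (F := F) 1

theorem linearize_one : linearize (1 : F[X]) = X := by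
  simpa using linearize_X_pow (F := F) 0

theorem linearize_dvd_linearize {f g : F[X]} (h : f ∣ g) : linearize f ∣ linearize g := by
  obtain ⟨h, rfl⟩ := h
  unfold linearize
  rw [mul_comm, map_mul, Module.End.mul_apply]
  exact dvd_aeval_frobeniusAlgHom_apply h _

theorem X_pow_add_X_add_one_dvd {k m : ℕ} (hk : k = Fintype.card F ^ m) :
    (X ^ k + X + 1 : F[X]) ∣ X ^ (k ^ 2 - 1) - 1 := by
  set P : F[X] := X ^ k + X + 1
  have hk₀ : k ≠ 0 := hk ▸ pow_ne_zero m Fintype.card_ne_zero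
  have hPk : P ^ k = X ^ k ^ 2 + X ^ k + 1 := by
    simp only [P, hk, add_pow_card_pow, one_pow, ← pow_mul, ← sq]
  have hXP : X * (X ^ (k ^ 2 - 1) - 1) = P ^ k - P := by
    rw [hPk, mul_sub, mul_one, ← pow_succ',
      Nat.sub_add_cancel (pow_pos (Nat.pos_of_ne_zero hk₀) 2)]
    ring
  have hPX : IsCoprime P X := by
    rw [isCoprime_comm, irreducible_X.coprime_iff_not_dvd, X_dvd_iff]
    simp [P, hk₀.symm]
  exact hPX.dvd_of_dvd_mul_left (hXP ▸ dvd_sub (dvd_pow_self P hk₀) dvd_rfl)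

end FiniteField

open FiniteField in
theorem stmt13 {F K : Type*} [Field F] [Fintype F] [Field K] [Algebra F K]
    (q m k : ℕ) (hq : q = Fintype.card F) (hm : 1 ≤ m) (hk : k = q ^ m)
    (hK : Module.finrank F K = k ^ 2 - 1) :
    Polynomial.Splits ((X ^ q ^ k + X ^ q + X : F[X]).map (algebraMap F K)) := by
  subst hq
  have hk₁ : 1 < k := hk ▸ Nat.one_lt_pow (by omega) Fintype.one_lt_card
  have : Module.Finite F K :=
    Module.finite_of_finrank_pos (hK ▸ Nat.sub_pos_of_lt (Nat.one_lt_pow two_ne_zero hk₁))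
  have : Finite K := Module.finite_of_finite F
  have : Fintype K := Fintype.ofFinite K
  have hcard : Fintype.card K = Fintype.card F ^ (k ^ 2 - 1) := by
    rw [Module.card_eq_pow_finrank (K := F) (V := K), hK]
  have hdvd :
      X ^ Fintype.card F ^ k + X ^ Fintype.card F + X ∣ (X ^ Fintype.card K - X : F[X]) := by
    have := linearize_dvd_linearize (X_pow_add_X_add_one_dvd hk)
    rwa [linearize_add, linearize_add, linearize_sub, linearize_X_pow, linearize_X_pow,
      linearize_X, linearize_one, ← hcard] at this
  refine (isSplittingField_sub K F).splits.of_dvd ?_ (Polynomial.map_dvd (algebraMap F K) hdvd)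
  exact Polynomial.map_ne_zero (X_pow_card_sub_X_ne_zero F Fintype.one_lt_card)
end

section
/- Let U and V be k-dimensional F_q-subspaces of F_{q^n}. Then dim(U ∩ αV) ≤ 1 for all α ∈ F_{q^n}^* if and only if for all nonzero a,c ∈ U and nonzero b,d ∈ V, ab = cd implies aF_q = cF_q and bF_q = dF_q. -/
/-!
Both sides say that the subspaces `U ∩ αV` contain no two independent vectors. Nonzero
`a, c ∈ U` and `b, d ∈ V` with `ab = cd` are exactly two nonzero vectors `a = αd` and `c = αb`
of `U ∩ αV` for `α = a/d`; and once `c = μa` with a unit `μ` of the base field, cancelling `a` in `ab = μad`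
gives `b = μd`.
-/

open Module Submodule

theorem Submodule.finrank_le_one_iff_span_singleton_eq {F M : Type*} [DivisionRing F]
    [AddCommGroup M] [Module F M] (W : Submodule F M) [FiniteDimensional F W] :
    finrank F W ≤ 1 ↔ ∀ x ∈ W, ∀ y ∈ W, x ≠ 0 → y ≠ 0 → span F {x} = span F {y} := by
  constructor
  · intro hW x hx y hy hx0 hy0
    have span_eq {z : M} (hz : z ∈ W) (hz0 : z ≠ 0) : span F {z} = W :=
      eq_of_le_of_finrank_le (span_singleton_le_iff_mem z W |>.2 hz)
        (by rwa [finrank_span_singleton hz0])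
    rw [span_eq hx hx0, span_eq hy hy0]
  · intro hW
    obtain rfl | hW0 := eq_or_ne W ⊥
    · simp
    obtain ⟨x, hx, hx0⟩ := exists_mem_ne_zero_of_ne_bot hW0
    have hle : W ≤ span F {x} := by
      intro y hy
      obtain rfl | hy0 := eq_or_ne y 0
      · exact zero_mem _
      · exact hW x hx y hy hx0 hy0 ▸ mem_span_singleton_self y
    exact (finrank_mono hle).trans (finrank_span_singleton hx0).le

theorem span_singleton_eq_of_mul_eq {F K : Type*} [Field F] [Ring K] [IsDomain K] [Algebra F K]
    {a b c d : K} (ha : a ≠ 0) (habcd : a * b = c * d) (hac : span F {a} = span F {c}) :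
    span F {b} = span F {d} := by
  obtain ⟨μ, rfl⟩ := span_singleton_eq_span_singleton.1 hac
  have hb : b = μ • d := mul_left_cancel₀ ha <| by
    rw [habcd, smul_mul_assoc, mul_smul_comm]
  exact (span_singleton_eq_span_singleton.2 ⟨μ, hb.symm⟩).symm

theorem stmt16_general {F K : Type*} [Field F] [Field K] [Fintype K] [Algebra F K]
    (U V : Submodule F K) :
    (∀ α : K, α ≠ 0 →
        Module.finrank F ↥(U ⊓ Submodule.map (LinearMap.mulLeft F α) V) ≤ 1) ↔
    (∀ a ∈ U, ∀ c ∈ U, ∀ b ∈ V, ∀ d ∈ V,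
      a ≠ 0 → c ≠ 0 → b ≠ 0 → d ≠ 0 → a * b = c * d →
        Submodule.span F {a} = Submodule.span F {c} ∧
        Submodule.span F {b} = Submodule.span F {d}) := by
  have : FiniteDimensional F K := Module.Finite.of_finite
  simp only [finrank_le_one_iff_span_singleton_eq]
  constructor
  · intro h a ha c hc b hb d hd ha0 hc0 hb0 hd0 habcd
    have ha' : a ∈ map (LinearMap.mulLeft F (a * d⁻¹)) V :=
      ⟨d, hd, by simp [hd0]⟩
    have hc' : c ∈ map (LinearMap.mulLeft F (a * d⁻¹)) V :=
      ⟨b, hb, by simp only [LinearMap.mulLeft_apply]; field_simp; rw [habcd, mul_comm]⟩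
    have hac := h _ (by simp [ha0, hd0]) a ⟨ha, ha'⟩ c ⟨hc, hc'⟩ ha0 hc0
    exact ⟨hac, span_singleton_eq_of_mul_eq ha0 habcd hac⟩
  · rintro h α - x ⟨hxU, b, hb, rfl⟩ y ⟨hyU, d, hd, rfl⟩ hx0 hy0
    simp only [LinearMap.mulLeft_apply] at *
    exact (h _ hxU _ hyU d hd b hb hx0 hy0 (right_ne_zero_of_mul hy0)
      (right_ne_zero_of_mul hx0) (by ring)).1

theorem stmt16 {F K : Type*} [Field F] [Fintype F] [Field K] [Fintype K] [Algebra F K]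
    (k : ℕ) (U V : Submodule F K)
    (hU : Module.finrank F U = k) (hV : Module.finrank F V = k) :
    (∀ α : K, α ≠ 0 →
        Module.finrank F ↥(U ⊓ Submodule.map (LinearMap.mulLeft F α) V) ≤ 1) ↔
    (∀ a ∈ U, ∀ c ∈ U, ∀ b ∈ V, ∀ d ∈ V,
      a ≠ 0 → c ≠ 0 → b ≠ 0 → d ≠ 0 → a * b = c * d →
        Submodule.span F {a} = Submodule.span F {c} ∧
        Submodule.span F {b} = Submodule.span F {d}) :=
  stmt16_general U V
end

section
/- Let V be a Sidon space of dimension k in F_{q^n}, γ a primitive element of F_{q^n}, and {γ^{n_i} : i ∈ [(q^k−1)/(q−1)]} a set of nonzero representatives of all one-dimensional F_q-subspaces of V. Then the set S = {n_i} is a Sidon set in Z_{(q^n−1)/(q−1)}, i.e., all pairwise sums n_i + n_j (i ≥ j) are distinct modulo (q^n−1)/(q−1). -/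
open Polynomial

/-!
If `a + b ≡ c + d` modulo `N = (q ^ n - 1) / (q - 1)`, then `γ ^ (a + b)` and `γ ^ (c + d)` differ
by a power of `γ ^ N`, and `γ ^ N` lies in `F` because `(γ ^ N) ^ (q - 1) = γ ^ (q ^ n - 1) = 1`.
Hence `γ ^ a * γ ^ b = μ • (γ ^ c * γ ^ d)` with `μ ∈ Fˣ`, and the Sidon property of `V` forces
`{γ ^ a F, γ ^ b F} = {γ ^ c F, γ ^ d F}`; since the exponents in `S` represent distinct lines,
`{a, b} = {c, d}`.
-/

namespace FiniteField

variable {F K : Type*} [Field F] [Fintype F] [Field K]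

theorem mem_range_algebraMap_of_pow_card_eq [Algebra F K] {x : K}
    (hx : x ^ Fintype.card F = x) : x ∈ (algebraMap F K).range := by
  have hsplits : (X ^ Fintype.card F - X : F[X]).Splits := by
    simpa using (isSplittingField_sub F F).splits
  refine hsplits.mem_range_of_isRoot (X_pow_card_sub_X_ne_zero F Fintype.one_lt_card) ?_
  simp [hx]

variable [Fintype K] [Algebra F K]

/-- `γ ^ ((q ^ n - 1) / (q - 1))` is the norm of `γ` down to `F`. -/
theorem pow_card_pow_sub_one_div_mem_range {n : ℕ}
    (hcard : Fintype.card K = Fintype.card F ^ n) {γ : K} (hγ : γ ≠ 0) :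
    γ ^ ((Fintype.card F ^ n - 1) / (Fintype.card F - 1)) ∈ (algebraMap F K).range := by
  set q := Fintype.card F
  set N := (q ^ n - 1) / (q - 1)
  have hq : 1 ≤ q := Fintype.card_pos
  have hN : N * (q - 1) = q ^ n - 1 := Nat.div_mul_cancel (Nat.sub_one_dvd_pow_sub_one q n)
  have hunit : (γ ^ N) ^ (q - 1) = 1 := by
    rw [← pow_mul, hN, ← hcard, pow_card_sub_one_eq_one γ hγ]
  apply mem_range_algebraMap_of_pow_card_eq
  calc (γ ^ N) ^ q = (γ ^ N) ^ (q - 1) * γ ^ N := by rw [← pow_succ, Nat.sub_add_cancel hq]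
    _ = γ ^ N := by rw [hunit, one_mul]

theorem exists_pow_eq_smul_pow_of_modEq {n : ℕ}
    (hcard : Fintype.card K = Fintype.card F ^ n) {γ : K} (hγ : γ ≠ 0) {a b : ℕ}
    (hab : a ≡ b [MOD (Fintype.card F ^ n - 1) / (Fintype.card F - 1)]) :
    ∃ μ : F, μ ≠ 0 ∧ γ ^ a = μ • γ ^ b := by
  set N := (Fintype.card F ^ n - 1) / (Fintype.card F - 1)
  obtain ⟨μ, hμ⟩ := pow_card_pow_sub_one_div_mem_range hcard hγ
  obtain ⟨t, ht⟩ := Nat.modEq_iff_dvd.mp hab.symm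
  have hμ0 : μ ≠ 0 := by
    rintro rfl
    exact pow_ne_zero N hγ (hμ.symm.trans (map_zero _))
  refine ⟨μ ^ t, zpow_ne_zero t hμ0, ?_⟩
  have ha : (a : ℤ) = N * t + b := by omega
  rw [Algebra.smul_def, map_zpow₀, hμ, ← zpow_natCast, ← zpow_natCast, ← zpow_natCast,
    ← zpow_mul, ← zpow_add₀ hγ, ha]

end FiniteField

theorem IsSidon.span_pair_eq_of_mul_eq_smul {F K : Type*} [Field F] [Field K] [Algebra F K]
    {V : Submodule F K} (hV : IsSidon V) {a b c d : K} (ha : a ∈ V) (hb : b ∈ V) (hc : c ∈ V)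
    (hd : d ∈ V) (ha0 : a ≠ 0) (hb0 : b ≠ 0) (hc0 : c ≠ 0) (hd0 : d ≠ 0) {μ : F} (hμ : μ ≠ 0)
    (h : a * b = μ • (c * d)) :
    ({Submodule.span F {a}, Submodule.span F {b}} : Set (Submodule F K)) =
      {Submodule.span F {c}, Submodule.span F {d}} := by
  rw [← Submodule.span_singleton_smul_eq (isUnit_iff_ne_zero.mpr hμ) c]
  exact hV a ha b hb (μ • c) (V.smul_mem μ hc) d hd ha0 hb0 (smul_ne_zero hμ hc0) hd0
    (by rw [h, smul_mul_assoc])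

theorem stmt17_general {F K : Type*} [Field F] [Fintype F] [Field K] [Fintype K] [Algebra F K]
    (q n : ℕ) (hq : q = Fintype.card F) (hcard : Fintype.card K = q ^ n)
    (V : Submodule F K) (hV : IsSidon V)
    (γ : K) (hγ0 : γ ≠ 0)
    (S : Finset ℕ)
    (hmem : ∀ m ∈ S, γ ^ m ∈ V)
    (hinj : ∀ m ∈ S, ∀ m' ∈ S,
      Submodule.span F {γ ^ m} = Submodule.span F {γ ^ m'} → m = m') :
    ∀ a ∈ S, ∀ b ∈ S, ∀ c ∈ S, ∀ d ∈ S,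
      (a + b) % ((q ^ n - 1) / (q - 1)) = (c + d) % ((q ^ n - 1) / (q - 1)) →
      ({a, b} : Finset ℕ) = {c, d} := by
  subst hq
  intro a ha b hb c hc d hd hmod
  obtain ⟨μ, hμ, hpow⟩ := FiniteField.exists_pow_eq_smul_pow_of_modEq hcard hγ0 hmod
  have hpow0 : ∀ m, γ ^ m ≠ 0 := fun m => pow_ne_zero m hγ0
  have hspan := hV.span_pair_eq_of_mul_eq_smul (hmem a ha) (hmem b hb) (hmem c hc) (hmem d hd)
    (hpow0 a) (hpow0 b) (hpow0 c) (hpow0 d) hμ (by simpa only [pow_add] using hpow)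
  rcases Set.pair_eq_pair_iff.mp hspan with ⟨hac, hbd⟩ | ⟨had, hbc⟩
  · rw [hinj a ha c hc hac, hinj b hb d hd hbd]
  · rw [hinj a ha d hd had, hinj b hb c hc hbc, Finset.pair_comm]

theorem stmt17 {F K : Type*} [Field F] [Fintype F] [Field K] [Fintype K] [Algebra F K]
    (q n k : ℕ) (hq : q = Fintype.card F) (hcard : Fintype.card K = q ^ n)
    (V : Submodule F K) (hk : Module.finrank F V = k) (hV : IsSidon V)
    (γ : K) (hγ0 : γ ≠ 0) (hγ : ∀ x : K, x ≠ 0 → ∃ m : ℕ, γ ^ m = x)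
    (S : Finset ℕ)
    (hmem : ∀ m ∈ S, γ ^ m ∈ V)
    (hinj : ∀ m ∈ S, ∀ m' ∈ S,
      Submodule.span F {γ ^ m} = Submodule.span F {γ ^ m'} → m = m')
    (hsurj : ∀ W : Submodule F K, W ≤ V → Module.finrank F W = 1 →
      ∃ m ∈ S, W = Submodule.span F {γ ^ m}) :
    ∀ a ∈ S, ∀ b ∈ S, ∀ c ∈ S, ∀ d ∈ S,
      (a + b) % ((q ^ n - 1) / (q - 1)) = (c + d) % ((q ^ n - 1) / (q - 1)) →
      ({a, b} : Finset ℕ) = {c, d} :=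
  stmt17_general q n hq hcard V hV γ hγ0 S hmem hinj
end
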